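/- arXiv:2111.11560 — 3 statements merged into one kernel-verified Lean document; each statement's English description precedes it below -/
import Mathlib

section
/- Let R11, R12, R21, R22 : ℝ → Matrix (Fin 3) (Fin 3) ℝ be matrix-valued functions of time, and suppose there exist constants c > 0 and M > 0 such that for every t ≥ 0 one has |det R11(t)| ≥ c, |det R22(t)| ≥ c, and every entry of R11(t), R12(t), R21(t), R22(t) is bounded in absolute value by M. Then there exists λ₀ ∈ (0,1) such that for every λ ∈ [0, λ₀) and every t ≥ 0, the 6×6 block matrix R(t;λ) = fromBlocks (R11(t)) (−λ·R12(t)) (−λ·R21(t)) (R22(t)) is invertible. -/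
/-! Write the grand resistance matrix as `diag(R11, R22) + λ N` with `N` off-diagonal. Cramer's
rule `A⁻¹ = det(A)⁻¹ • adj(A)`, together with the lower bound on the determinants and the entry
bound, bounds the ∞-operator norm of `diag(R11, R22)⁻¹` uniformly in `t`. Once `λ ‖N‖` is below
the reciprocal of that bound, the Neumann series shows that the perturbed matrix is invertible. -/

open Matrix

attribute [local instance] Matrix.linftyOpSeminormedAddCommGroup Matrix.linftyOpNormedRing
  Matrix.linftyOpNormedAlgebra

namespace Matrix

theorem abs_fromBlocks_apply_le {l m n o α : Type*} [Lattice α] [AddGroup α]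
    {A : Matrix n l α} {B : Matrix n m α} {C : Matrix o l α} {D : Matrix o m α} {K : α}
    (hA : ∀ i j, |A i j| ≤ K) (hB : ∀ i j, |B i j| ≤ K) (hC : ∀ i j, |C i j| ≤ K)
    (hD : ∀ i j, |D i j| ≤ K) : ∀ i j, |fromBlocks A B C D i j| ≤ K := by
  rintro (i | i) (j | j)
  exacts [hA i j, hB i j, hC i j, hD i j]

theorem fromBlocks_eq_diag_add_offDiag {l m n o α : Type*} [AddZeroClass α]
    (A : Matrix n l α) (B : Matrix n m α) (C : Matrix o l α) (D : Matrix o m α) :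
    fromBlocks A B C D = fromBlocks A 0 0 D + fromBlocks 0 B C 0 := by
  simp [fromBlocks_add]

variable {n : Type*} [Fintype n]

theorem linfty_opNorm_le_card_mul {m α : Type*} [Fintype m] [SeminormedAddCommGroup α]
    {A : Matrix m n α} {K : ℝ} (hK : 0 ≤ K) (hA : ∀ i j, ‖A i j‖ ≤ K) :
    ‖A‖ ≤ Fintype.card n * K := by
  change ‖fun i => WithLp.toLp 1 (A i)‖ ≤ _
  refine (pi_norm_le_iff_of_nonneg (by positivity)).2 fun i => ?_
  rw [PiLp.norm_eq_of_L1]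
  simpa using Finset.sum_le_sum fun j (_ : j ∈ Finset.univ) => hA i j

variable [DecidableEq n]

theorem abs_adjugate_apply_le {A : Matrix n n ℝ} {K : ℝ} (hK : 1 ≤ K)
    (hA : ∀ i j, |A i j| ≤ K) (i j : n) :
    |A.adjugate i j| ≤ (Fintype.card n).factorial * K ^ Fintype.card n := by
  rw [adjugate_apply, ← nsmul_eq_mul]
  refine det_le (abv := AbsoluteValue.abs) fun k l => ?_
  rw [updateRow_apply]
  split_ifs
  · rw [Pi.single_apply]
    split_ifs <;> simp [hK, zero_le_one.trans hK]
  · exact hA k l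

theorem abs_inv_apply_le {A : Matrix n n ℝ} {c K : ℝ} (hc : 0 < c) (hK : 1 ≤ K)
    (hA : ∀ i j, |A i j| ≤ K) (hdet : c ≤ |A.det|) (i j : n) :
    |A⁻¹ i j| ≤ (Fintype.card n).factorial * K ^ Fintype.card n / c := by
  rw [inv_def, smul_apply, smul_eq_mul, Ring.inverse_eq_inv', abs_mul, abs_inv, div_eq_inv_mul]
  exact mul_le_mul (inv_anti₀ hc hdet) (abs_adjugate_apply_le hK hA i j) (abs_nonneg _)
    (by positivity)

theorem isUnit_add_of_norm_mul_norm_inv_lt {A E : Matrix n n ℝ} (hA : IsUnit A)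
    (h : ‖E‖ * ‖A⁻¹‖ < 1) : IsUnit (A + E) := by
  nontriviality Matrix n n ℝ
  obtain ⟨u, rfl⟩ := hA
  rw [← coe_units_inv] at h
  refine (u.add E ?_).isUnit
  rwa [← one_div, lt_div_iff₀ (Units.norm_pos _)]

theorem isUnit_add_of_abs_apply_le {A E : Matrix n n ℝ} {c K ε : ℝ} (hc : 0 < c) (hK : 1 ≤ K)
    (hA : ∀ i j, |A i j| ≤ K) (hdet : c ≤ |A.det|) (hε : 0 ≤ ε) (hE : ∀ i j, |E i j| ≤ ε)
    (hsmall : Fintype.card n ^ 2 * (Fintype.card n).factorial * K ^ Fintype.card n * ε < c) :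
    IsUnit (A + E) := by
  have hAunit : IsUnit A := (isUnit_iff_isUnit_det A).2 (abs_pos.1 (hc.trans_le hdet)).isUnit
  have hinv : ‖A⁻¹‖ ≤ Fintype.card n * ((Fintype.card n).factorial * K ^ Fintype.card n / c) :=
    linfty_opNorm_le_card_mul (by positivity) (abs_inv_apply_le hc hK hA hdet)
  have hnorm : ‖E‖ ≤ Fintype.card n * ε := linfty_opNorm_le_card_mul hε hE
  refine isUnit_add_of_norm_mul_norm_inv_lt hAunit ?_
  calc ‖E‖ * ‖A⁻¹‖
      ≤ Fintype.card n * ε *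
          (Fintype.card n * ((Fintype.card n).factorial * K ^ Fintype.card n / c)) := by gcongr
    _ = Fintype.card n ^ 2 * (Fintype.card n).factorial * K ^ Fintype.card n * ε / c := by ring
    _ < 1 := (div_lt_one hc).2 hsmall

theorem isUnit_fromBlocks_neg_smul {m : Type*} [Fintype m] [DecidableEq m]
    {A : Matrix m m ℝ} {B : Matrix m n ℝ} {C : Matrix n m ℝ} {D : Matrix n n ℝ} {c K lam : ℝ}
    (hc : 0 < c) (hK : 1 ≤ K) (hA : ∀ i j, |A i j| ≤ K) (hB : ∀ i j, |B i j| ≤ K)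
    (hC : ∀ i j, |C i j| ≤ K) (hD : ∀ i j, |D i j| ≤ K) (hdetA : c ≤ |A.det|)
    (hdetD : c ≤ |D.det|) (hlam : 0 ≤ lam)
    (hsmall : (Fintype.card m + Fintype.card n) ^ 2 * (Fintype.card m + Fintype.card n).factorial *
      K ^ (Fintype.card m + Fintype.card n) * (lam * K) < c ^ 2) :
    IsUnit (fromBlocks A ((-lam) • B) ((-lam) • C) D) := by
  have hK0 : 0 ≤ lam * K := by positivity
  have hscaled {x : ℝ} (hx : |x| ≤ K) : |-lam * x| ≤ lam * K := by
    simpa [abs_mul, abs_of_nonneg hlam] using mul_le_mul_of_nonneg_left hx hlam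
  have hdiag : ∀ i j, |fromBlocks A 0 0 D i j| ≤ K :=
    abs_fromBlocks_apply_le hA (fun _ _ => by simpa using zero_le_one.trans hK)
      (fun _ _ => by simpa using zero_le_one.trans hK) hD
  have hoff : ∀ i j, |fromBlocks 0 ((-lam) • B) ((-lam) • C) 0 i j| ≤ lam * K :=
    abs_fromBlocks_apply_le (fun _ _ => by simpa using hK0)
      (fun i j => by simpa using hscaled (hB i j)) (fun i j => by simpa using hscaled (hC i j))
      (fun _ _ => by simpa using hK0)
  have hdet : c ^ 2 ≤ |(fromBlocks A 0 0 D).det| := by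
    rw [det_fromBlocks_zero₂₁, abs_mul, sq]
    exact mul_le_mul hdetA hdetD hc.le (abs_nonneg _)
  rw [fromBlocks_eq_diag_add_offDiag]
  exact isUnit_add_of_abs_apply_le (by positivity) hK hdiag hdet hK0 hoff (by simpa using hsmall)

end Matrix

theorem invertibility_grand_resistance_matrix_general
    (R11 R12 R21 R22 : ℝ → Matrix (Fin 3) (Fin 3) ℝ)
    (c M : ℝ) (hc : 0 < c)
    (hdet11 : ∀ t : ℝ, 0 ≤ t → c ≤ |(R11 t).det|)
    (hdet22 : ∀ t : ℝ, 0 ≤ t → c ≤ |(R22 t).det|)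
    (hbound : ∀ t : ℝ, 0 ≤ t → ∀ i j : Fin 3,
      |R11 t i j| ≤ M ∧ |R12 t i j| ≤ M ∧ |R21 t i j| ≤ M ∧ |R22 t i j| ≤ M) :
    ∃ lam₀ ∈ Set.Ioo (0 : ℝ) 1, ∀ lam ∈ Set.Ico (0 : ℝ) lam₀, ∀ t : ℝ, 0 ≤ t →
      IsUnit (Matrix.fromBlocks (R11 t) ((-lam) • R12 t) ((-lam) • R21 t) (R22 t)) := by
  obtain ⟨K, hK, hMK⟩ : ∃ K : ℝ, 1 ≤ K ∧ M ≤ K := ⟨max M 1, le_max_right M 1, le_max_left M 1⟩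
  set L : ℝ := (3 + 3) ^ 2 * (3 + 3 : ℕ).factorial * K ^ (3 + 3) * K
  refine ⟨min (1 / 2) (c ^ 2 / L), ⟨by positivity, by norm_num [min_lt_iff]⟩, ?_⟩
  rintro lam ⟨hlam0, hlam⟩ t ht
  have hsmall : lam * L < c ^ 2 :=
    (lt_div_iff₀ (by positivity)).1 (hlam.trans_le (min_le_right _ _))
  refine isUnit_fromBlocks_neg_smul hc hK (fun i j => (hbound t ht i j).1.trans hMK)
    (fun i j => (hbound t ht i j).2.1.trans hMK) (fun i j => (hbound t ht i j).2.2.1.trans hMK)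
    (fun i j => (hbound t ht i j).2.2.2.trans hMK) (hdet11 t ht) (hdet22 t ht) hlam0 ?_
  simp only [Fintype.card_fin, Nat.cast_ofNat]
  linarith

/-- **Invertibility Theorem** for the grand resistance matrix of two
hydrodynamically interacting scallops: if the diagonal blocks have determinant
uniformly bounded away from zero and all entries of all blocks are uniformly
bounded, then for all sufficiently small interaction strengths `λ ∈ [0, λ₀)`
(with `λ₀ ∈ (0,1)`) the block matrix
`fromBlocks (R11 t) (−λ·R12 t) (−λ·R21 t) (R22 t)` is invertible for all `t ≥ 0`. -/
theorem invertibility_grand_resistance_matrix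
    (R11 R12 R21 R22 : ℝ → Matrix (Fin 3) (Fin 3) ℝ)
    (c M : ℝ) (hc : 0 < c) (hM : 0 < M)
    (hdet11 : ∀ t : ℝ, 0 ≤ t → c ≤ |(R11 t).det|)
    (hdet22 : ∀ t : ℝ, 0 ≤ t → c ≤ |(R22 t).det|)
    (hbound : ∀ t : ℝ, 0 ≤ t → ∀ i j : Fin 3,
      |R11 t i j| ≤ M ∧ |R12 t i j| ≤ M ∧ |R21 t i j| ≤ M ∧ |R22 t i j| ≤ M) :
    ∃ lam₀ ∈ Set.Ioo (0 : ℝ) 1, ∀ lam ∈ Set.Ico (0 : ℝ) lam₀, ∀ t : ℝ, 0 ≤ t →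
      IsUnit (Matrix.fromBlocks (R11 t) ((-lam) • R12 t) ((-lam) • R21 t) (R22 t)) :=
  invertibility_grand_resistance_matrix_general R11 R12 R21 R22 c M hc hdet11 hdet22 hbound
end

section
/- Let e₁, e₂ ∈ ℝ² be unit vectors, let L > 0, and let C∥ > 0, C⊥ > 0. Define the 2×2 real matrix A := L·(2·C⊥·I + (C∥ − C⊥)·(e₁⊗e₁ + e₂⊗e₂)), the vector b := (L²/2)·C⊥·(e₁ + e₂)^⊥ ∈ ℝ², and the scalar ω := 2L³C⊥/3, where for v = (v₁, v₂) ∈ ℝ² we write v^⊥ := (−v₂, v₁), and e⊗e denotes the 2×2 matrix with entries (e⊗e)ᵢⱼ = eᵢeⱼ. Then the symmetric 3×3 real matrix M := [[A₁₁, A₁₂, b₁], [A₂₁, A₂₂, b₂], [b₁, b₂, ω]] is positive definite. -/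
/-- The grand resistance matrix of an individual two-link scallop (links of
length `L` along unit vectors `e₁`, `e₂`, drag coefficients `C∥`, `C⊥`) is a
symmetric positive definite 3×3 matrix. -/
theorem grand_resistance_matrix_posDef
    (e₁ e₂ : Fin 2 → ℝ)
    (he₁ : e₁ 0 ^ 2 + e₁ 1 ^ 2 = 1) (he₂ : e₂ 0 ^ 2 + e₂ 1 ^ 2 = 1)
    (L Cpar Cperp : ℝ) (hL : 0 < L) (hCpar : 0 < Cpar) (hCperp : 0 < Cperp) :
    let A : Matrix (Fin 2) (Fin 2) ℝ :=
      L • ((2 * Cperp) • (1 : Matrix (Fin 2) (Fin 2) ℝ) +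
        (Cpar - Cperp) • (Matrix.vecMulVec e₁ e₁ + Matrix.vecMulVec e₂ e₂))
    let b : Fin 2 → ℝ := (L ^ 2 / 2 * Cperp) • ![-(e₁ 1 + e₂ 1), e₁ 0 + e₂ 0]
    let ω : ℝ := 2 * L ^ 3 * Cperp / 3
    (!![A 0 0, A 0 1, b 0; A 1 0, A 1 1, b 1; b 0, b 1, ω]).PosDef := by
  intro A b ω
  rw [Matrix.posDef_iff_dotProduct_mulVec]
  constructor
  · ext i j
    fin_cases i <;> fin_cases j <;>
      simp [A, b, ω, Matrix.vecMulVec_apply, Matrix.conjTranspose_apply, Matrix.one_apply] <;> ring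
  · intro x hx
    simp only [A, b, ω, Matrix.mulVec, dotProduct, Fin.sum_univ_three,
      Matrix.smul_apply, Matrix.add_apply, Matrix.one_apply, Matrix.vecMulVec_apply,
      smul_eq_mul, Matrix.cons_val', Matrix.cons_val_zero, Matrix.cons_val_one,
      Matrix.cons_val_two, Matrix.tail_cons, Matrix.head_cons, Matrix.empty_val',
      Matrix.cons_val_fin_one, Matrix.head_fin_const,
      Pi.smul_apply, Matrix.of_apply, star_trivial, if_true]
    norm_num
    have key : x 0 *
          (L * (2 * Cperp + (Cpar - Cperp) * (e₁ 0 * e₁ 0 + e₂ 0 * e₂ 0)) * x 0 +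
              L * ((Cpar - Cperp) * (e₁ 0 * e₁ 1 + e₂ 0 * e₂ 1)) * x 1 +
            L ^ 2 / 2 * Cperp * (-e₂ 1 + -e₁ 1) * x 2) +
        x 1 *
          (L * ((Cpar - Cperp) * (e₁ 1 * e₁ 0 + e₂ 1 * e₂ 0)) * x 0 +
              L * (2 * Cperp + (Cpar - Cperp) * (e₁ 1 * e₁ 1 + e₂ 1 * e₂ 1)) * x 1 +
            L ^ 2 / 2 * Cperp * (e₁ 0 + e₂ 0) * x 2) +
      x 2 *
        (L ^ 2 / 2 * Cperp * (-e₂ 1 + -e₁ 1) * x 0 + L ^ 2 / 2 * Cperp * (e₁ 0 + e₂ 0) * x 1 +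
          2 * L ^ 3 * Cperp / 3 * x 2)
      = L * Cpar * ((e₁ 0 * x 0 + e₁ 1 * x 1) ^ 2 + (e₂ 0 * x 0 + e₂ 1 * x 1) ^ 2)
        + L * Cperp * ((e₁ 0 * x 1 - e₁ 1 * x 0 + L * x 2 / 2) ^ 2
            + (e₂ 0 * x 1 - e₂ 1 * x 0 + L * x 2 / 2) ^ 2
            + L ^ 2 * x 2 ^ 2 / 6) := by
      linear_combination (-(L * Cperp * (x 0 ^ 2 + x 1 ^ 2))) * he₁
        + (-(L * Cperp * (x 0 ^ 2 + x 1 ^ 2))) * he₂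
    rw [key]
    have hid1 : (e₁ 0 * x 0 + e₁ 1 * x 1) ^ 2 + (e₁ 0 * x 1 - e₁ 1 * x 0) ^ 2
        = x 0 ^ 2 + x 1 ^ 2 := by linear_combination (x 0 ^ 2 + x 1 ^ 2) * he₁
    rcases eq_or_ne (x 2) 0 with h2 | h2
    · have hu : 0 < x 0 ^ 2 + x 1 ^ 2 := by
        rcases eq_or_ne (x 0) 0 with h0 | h0
        · have h1 : x 1 ≠ 0 := by
            intro h1
            apply hx
            ext i
            fin_cases i <;> simp [h0, h1, h2]
          positivity
        · positivity
      rw [h2]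
      norm_num
      rcases le_total Cpar Cperp with h | h
      · have f1 : 0 < L * Cpar * (x 0 ^ 2 + x 1 ^ 2) := by positivity
        have f2 : L * Cpar * ((e₁ 0 * x 0 + e₁ 1 * x 1) ^ 2 + (e₁ 0 * x 1 - e₁ 1 * x 0) ^ 2)
            = L * Cpar * (x 0 ^ 2 + x 1 ^ 2) := by
          linear_combination (L * Cpar * (x 0 ^ 2 + x 1 ^ 2)) * he₁
        have f3 : 0 ≤ L * (Cperp - Cpar) * (e₁ 0 * x 1 - e₁ 1 * x 0) ^ 2 :=
          mul_nonneg (mul_nonneg hL.le (sub_nonneg.2 h)) (sq_nonneg _)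
        have f4 : 0 ≤ L * Cpar * (e₂ 0 * x 0 + e₂ 1 * x 1) ^ 2 :=
          mul_nonneg (mul_pos hL hCpar).le (sq_nonneg _)
        have f5 : 0 ≤ L * Cperp * (e₂ 0 * x 1 - e₂ 1 * x 0) ^ 2 :=
          mul_nonneg (mul_pos hL hCperp).le (sq_nonneg _)
        linarith [f1, f2, f3, f4, f5]
      · have f1 : 0 < L * Cperp * (x 0 ^ 2 + x 1 ^ 2) := by positivity
        have f2 : L * Cperp * ((e₁ 0 * x 0 + e₁ 1 * x 1) ^ 2 + (e₁ 0 * x 1 - e₁ 1 * x 0) ^ 2)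
            = L * Cperp * (x 0 ^ 2 + x 1 ^ 2) := by
          linear_combination (L * Cperp * (x 0 ^ 2 + x 1 ^ 2)) * he₁
        have f3 : 0 ≤ L * (Cpar - Cperp) * (e₁ 0 * x 0 + e₁ 1 * x 1) ^ 2 :=
          mul_nonneg (mul_nonneg hL.le (sub_nonneg.2 h)) (sq_nonneg _)
        have f4 : 0 ≤ L * Cpar * (e₂ 0 * x 0 + e₂ 1 * x 1) ^ 2 :=
          mul_nonneg (mul_pos hL hCpar).le (sq_nonneg _)
        have f5 : 0 ≤ L * Cperp * (e₂ 0 * x 1 - e₂ 1 * x 0) ^ 2 :=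
          mul_nonneg (mul_pos hL hCperp).le (sq_nonneg _)
        linarith [f1, f2, f3, f4, f5]
    · have hpos : 0 < L * Cperp * (L ^ 2 * x 2 ^ 2 / 6) := by positivity
      have g1 : 0 ≤ L * Cpar * (e₁ 0 * x 0 + e₁ 1 * x 1) ^ 2 :=
        mul_nonneg (mul_pos hL hCpar).le (sq_nonneg _)
      have g2 : 0 ≤ L * Cpar * (e₂ 0 * x 0 + e₂ 1 * x 1) ^ 2 :=
        mul_nonneg (mul_pos hL hCpar).le (sq_nonneg _)
      have g3 : 0 ≤ L * Cperp * (e₁ 0 * x 1 - e₁ 1 * x 0 + L * x 2 / 2) ^ 2 :=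
        mul_nonneg (mul_pos hL hCperp).le (sq_nonneg _)
      have g4 : 0 ≤ L * Cperp * (e₂ 0 * x 1 - e₂ 1 * x 0 + L * x 2 / 2) ^ 2 :=
        mul_nonneg (mul_pos hL hCperp).le (sq_nonneg _)
      linarith [hpos, g1, g2, g3, g4]
end

section
/- Let e₁, e₂, e'₁, e'₂ ∈ ℝ² be unit vectors, let L > 0, C∥ > 0, C⊥ > 0, λ ∈ (0,1), Λ := 1 − λ², let V, V' ∈ ℝ² and Ω, Ω', S, S' ∈ ℝ. For a unit vector e define the 2×2 matrix J(e) := C⊥·I + (C∥ − C⊥)·(e⊗e), for v = (v₁,v₂) ∈ ℝ² write v^⊥ := (−v₂, v₁), and for u, w ∈ ℝ² write u × w := u₁w₂ − u₂w₁. Define the force densities f₁(s) := −(1/Λ)·J(e₁)·(V + s·Ω·e₁^⊥) + (λ/Λ)·J(e'₁)·(V' + s·Ω'·e'₁^⊥) and f₂(s) := −(1/Λ)·J(e₂)·(V + s·(Ω + S)·e₂^⊥) + (λ/Λ)·J(e'₂)·(V' + s·(Ω' + S')·e'₂^⊥), and the torque density τ(s) := (s·e₁) × f₁(s) + (s·e₂)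 × f₂(s). Then ∫₀ᴸ τ(s) ds = −(1/Λ)·(b·V) − (1/Λ)·ω·Ω + (λ/Λ)·(d·V') + (λ/Λ)·ϖ·Ω' − (1/Λ)·(ω/2)·S + (λ/Λ)·β·S', where b := (L²/2)·C⊥·(e₁ + e₂)^⊥, ω := 2·L³·C⊥/3, d := (L²·(C∥ − C⊥)/2)·((e₁^⊥ · e'₁)·e'₁ + (e₂^⊥ · e'₂)·e'₂) + b, ϖ := (L³·C⊥/3)·(e₁·e'₁ + e₂·e'₂), and β := (L³·C⊥/3)·(e₂·e'₂). -/
open Matrix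

/-- The rotation of a planar vector by `π/2`: `v^⊥ = (−v₂, v₁)`. -/
def perp (v : Fin 2 → ℝ) : Fin 2 → ℝ := ![-(v 1), v 0]

/-- The planar cross product `u × w = u₁w₂ − u₂w₁`. -/
def cross2 (u w : Fin 2 → ℝ) : ℝ := u 0 * w 1 - u 1 * w 0

/-- The Resistive Force Theory drag operator of a link directed along `e`. -/
def rftDrag (Cpar Cperp : ℝ) (e : Fin 2 → ℝ) : Matrix (Fin 2) (Fin 2) ℝ :=
  Cperp • (1 : Matrix (Fin 2) (Fin 2) ℝ) + (Cpar - Cperp) • Matrix.vecMulVec e e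

lemma poly_integral (A B L : ℝ) :
    (∫ s in (0:ℝ)..L, (A * s + B * s ^ 2)) = A * (L ^ 2 / 2) + B * (L ^ 3 / 3) := by
  rw [intervalIntegral.integral_add
    (f := fun s => A * s) (g := fun s => B * s ^ 2)
    ((continuous_const.mul continuous_id').intervalIntegrable 0 L)
    ((continuous_const.mul (continuous_pow 2)).intervalIntegrable 0 L),
    intervalIntegral.integral_const_mul, intervalIntegral.integral_const_mul,
    integral_id, integral_pow]
  norm_num

set_option maxHeartbeats 4000000 in
/-- Integrating the Resistive-Force-Theory torque density (about the hinge)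
along the two links of one scallop (including the hydrodynamic interaction of
strength `λ` with the other scallop) yields the total torque
`−(1/Λ)·b·V − (1/Λ)·ω·Ω + (λ/Λ)·d·V' + (λ/Λ)·ϖ·Ω' − (1/Λ)·(ω/2)·S + (λ/Λ)·β·S'`. -/
theorem total_torque_on_scallop
    (e₁ e₂ e₁' e₂' : Fin 2 → ℝ)
    (he₁ : e₁ 0 ^ 2 + e₁ 1 ^ 2 = 1) (he₂ : e₂ 0 ^ 2 + e₂ 1 ^ 2 = 1)
    (he₁' : e₁' 0 ^ 2 + e₁' 1 ^ 2 = 1) (he₂' : e₂' 0 ^ 2 + e₂' 1 ^ 2 = 1)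
    (L Cpar Cperp lam : ℝ)
    (hL : 0 < L) (hCpar : 0 < Cpar) (hCperp : 0 < Cperp)
    (hlam : lam ∈ Set.Ioo (0 : ℝ) 1)
    (V V' : Fin 2 → ℝ) (Ω Ω' S S' : ℝ) :
    let Λ : ℝ := 1 - lam ^ 2
    let f₁ : ℝ → Fin 2 → ℝ := fun s =>
      (-(1 / Λ)) • (rftDrag Cpar Cperp e₁).mulVec (V + (s * Ω) • perp e₁)
        + (lam / Λ) • (rftDrag Cpar Cperp e₁').mulVec (V' + (s * Ω') • perp e₁')
    let f₂ : ℝ → Fin 2 → ℝ := fun s =>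
      (-(1 / Λ)) • (rftDrag Cpar Cperp e₂).mulVec (V + (s * (Ω + S)) • perp e₂)
        + (lam / Λ) • (rftDrag Cpar Cperp e₂').mulVec (V' + (s * (Ω' + S')) • perp e₂')
    let b : Fin 2 → ℝ := (L ^ 2 / 2 * Cperp) • perp (e₁ + e₂)
    let ω : ℝ := 2 * L ^ 3 * Cperp / 3
    let d : Fin 2 → ℝ :=
      (L ^ 2 * (Cpar - Cperp) / 2) •
          ((perp e₁ ⬝ᵥ e₁') • e₁' + (perp e₂ ⬝ᵥ e₂') • e₂') + b
    let ϖ : ℝ := L ^ 3 * Cperp / 3 * (e₁ ⬝ᵥ e₁' + e₂ ⬝ᵥ e₂')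
    let β : ℝ := L ^ 3 * Cperp / 3 * (e₂ ⬝ᵥ e₂')
    (∫ s in (0 : ℝ)..L, (cross2 (s • e₁) (f₁ s) + cross2 (s • e₂) (f₂ s)))
      = -(1 / Λ) * (b ⬝ᵥ V) - (1 / Λ) * ω * Ω + (lam / Λ) * (d ⬝ᵥ V')
        + (lam / Λ) * ϖ * Ω' - (1 / Λ) * (ω / 2) * S + (lam / Λ) * β * S' := by
  intro Λ f₁ f₂ b ω d ϖ β
  set g : ℝ → ℝ := fun s => cross2 (s • e₁) (f₁ s) + cross2 (s • e₂) (f₂ s) with hg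
  have key : ∀ s : ℝ, g s = (2 * g 1 - g 2 / 2) * s + (g 2 / 2 - g 1) * s ^ 2 := by
    intro s
    simp only [hg, f₁, f₂, cross2, perp, rftDrag, Matrix.mulVec, Matrix.vecMulVec,
      dotProduct, Fin.sum_univ_two, Matrix.one_apply, Matrix.add_apply,
      Matrix.smul_apply, Pi.add_apply, Pi.smul_apply, smul_eq_mul,
      Matrix.cons_val_zero, Matrix.cons_val_one, Matrix.head_cons, Matrix.of_apply]
    norm_num
    ring
  have hint : (∫ s in (0:ℝ)..L, g s)
      = (2 * g 1 - g 2 / 2) * (L ^ 2 / 2) + (g 2 / 2 - g 1) * (L ^ 3 / 3) := by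
    rw [intervalIntegral.integral_congr (g := fun s => (2 * g 1 - g 2 / 2) * s + (g 2 / 2 - g 1) * s ^ 2) (fun s _ => key s)]
    exact poly_integral _ _ _
  rw [show (∫ s in (0:ℝ)..L, (cross2 (s • e₁) (f₁ s) + cross2 (s • e₂) (f₂ s))) = ∫ s in (0:ℝ)..L, g s from rfl, hint]
  simp only [hg, f₁, f₂, b, ω, d, ϖ, β, Λ, cross2, perp, rftDrag, Matrix.mulVec,
    Matrix.vecMulVec, dotProduct, Fin.sum_univ_two, Matrix.one_apply,
    Matrix.add_apply, Matrix.smul_apply, Pi.add_apply, Pi.smul_apply, smul_eq_mul,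
    Matrix.cons_val_zero, Matrix.cons_val_one, Matrix.head_cons, Matrix.of_apply]
  norm_num
  linear_combination (-(1 / (1 - lam ^ 2)) * Cperp * Ω * L ^ 3 / 3) * he₁ +
    (-(1 / (1 - lam ^ 2)) * Cperp * (Ω + S) * L ^ 3 / 3) * he₂
end
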